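/- arXiv:1701.04651 — 3 statements merged into one kernel-verified Lean document; each statement's English description precedes it below -/
import Mathlib

section
/- Let p and q be interpolating profiles such that p - q is Lebesgue integrable on ℝ. Then ∫_ℝ (p(x) - q(x)) dx = ∫_ℝ (p̄(x) - q̄(x)) dx, where p̄, q̄ are the increasing rearrangements of p, q. -/
open MeasureTheory Filter Set
open scoped ENNReal

noncomputable section

/-- Convolution `(p ⊗ w)(x) = ∫ p(y) w(x-y) dy`. -/
def convw (p w : ℝ → ℝ) (x : ℝ) : ℝ := ∫ y, p y * w (x - y)

/-- `w` is a window: bounded, nonnegative, even, integrable, normalized. -/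
structure IsWindow (w : ℝ → ℝ) : Prop where
  nonneg : ∀ x, 0 ≤ w x
  even : ∀ x, w (-x) = w x
  bounded : ∃ M, ∀ x, w x ≤ M
  integrable : Integrable w
  normalized : (∫ x, w x) = 1

/-- Generalized inverse `h⁻¹(u) = inf {v ∈ [0,1] : h v > u}`. -/
def geninv (h : ℝ → ℝ) (u : ℝ) : ℝ := sInf {v | v ∈ Icc (0:ℝ) 1 ∧ u < h v}

/-- `h` is an update function: nondecreasing from [0,1] to [0,1] with h 0 = 0, h 1 = 1. -/
def IsUpdate (h : ℝ → ℝ) : Prop :=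
  MonotoneOn h (Icc (0:ℝ) 1) ∧ (∀ v ∈ Icc (0:ℝ) 1, h v ∈ Icc (0:ℝ) 1) ∧ h 0 = 0 ∧ h 1 = 1

/-- The potential function φ(u,v). -/
def pot (hf hg : ℝ → ℝ) (u v : ℝ) : ℝ :=
  (∫ u' in (0:ℝ)..u, geninv hg u') + (∫ v' in (0:ℝ)..v, geninv hf v') - u * v

/-- The positive gap condition. -/
def PGC (hf hg : ℝ → ℝ) : Prop :=
  pot hf hg 1 1 = 0 ∧ ∀ u ∈ Icc (0:ℝ) 1, ∀ v ∈ Icc (0:ℝ) 1, 0 ≤ pot hf hg u v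

/-- The strictly positive gap condition. -/
def SPGC (hf hg : ℝ → ℝ) : Prop :=
  pot hf hg 1 1 = 0 ∧ ∀ u ∈ Icc (0:ℝ) 1, ∀ v ∈ Icc (0:ℝ) 1,
    (u, v) ≠ ((0:ℝ), (0:ℝ)) → (u, v) ≠ ((1:ℝ), (1:ℝ)) → 0 < pot hf hg u v

/-- Interpolating profile: takes values in [0,1], tends to 0 at -∞ and to 1 at +∞. -/
def IsProfile (p : ℝ → ℝ) : Prop :=
  (∀ x, p x ∈ Icc (0:ℝ) 1) ∧ Tendsto p atBot (nhds 0) ∧ Tendsto p atTop (nhds 1)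

/-- `H(t) = ∫_0^t h⁻¹`. -/
def Hfun (h : ℝ → ℝ) (t : ℝ) : ℝ := ∫ v in (0:ℝ)..t, geninv h v

/-- The potential functional `W(f,g)`, valued in [0,∞]. -/
def Wfun (w hf hg f g : ℝ → ℝ) : ℝ≥0∞ :=
  ∫⁻ x, ENNReal.ofReal
    (Hfun hg (g x) + convw (fun y => Hfun hf (f y)) w x - convw f w x * g x)

/-- Saturation of a profile `f` at level `K`. -/
def cut (f : ℝ → ℝ) (K : ℝ) (x : ℝ) : ℝ :=
  (if |x| ≤ K then f x else 0) + (if K < x then 1 else 0)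

/-- Left endpoint of the maximal half-line contained in the level set `{x : p x > t}`. -/
def aT (p : ℝ → ℝ) (t : ℝ) : ℝ := sInf {a : ℝ | Ioi a ⊆ {x | t < p x}}

/-- Increasing rearrangement of an interpolating profile. -/
def rearr (p : ℝ → ℝ) (x : ℝ) : ℝ :=
  (volume {t : ℝ | t ∈ Ioo (0:ℝ) 1 ∧
    aT p t - (volume ({x | t < p x} \ Ioi (aT p t))).toReal < x}).toReal

/-- `Ω(x) = ∫_{-∞}^x w`. -/
def Om (w : ℝ → ℝ) (x : ℝ) : ℝ := ∫ z in Iic x, w z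

/-- The kernel `V(x) = ∫_{-∞}^x Ω`. -/
def Vker (w : ℝ → ℝ) (x : ℝ) : ℝ := ∫ z in Iic x, Om w z

/-- `κ(x) = V(x) - x Ω(x)`. -/
def kap (w : ℝ → ℝ) (x : ℝ) : ℝ := Vker w x - x * Om w x

/-- Right-continuous generalized inverse of a profile. -/
def rinv (p : ℝ → ℝ) (u : ℝ) : ℝ := sInf {x | u < p x}

/-- Displacement interpolant of two nondecreasing interpolating profiles. -/
def dispInterp (p0 p1 : ℝ → ℝ) (l x : ℝ) : ℝ :=
  sInf {u | u ∈ Ioo (0:ℝ) 1 ∧ x < (1 - l) * rinv p0 u + l * rinv p1 u}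

/-- A profile saturated off of the interval [-K,K]. -/
def Saturated (f : ℝ → ℝ) (K : ℝ) : Prop :=
  (∀ x, x < -K → f x = 0) ∧ (∀ x, K < x → f x = 1)

/-- Consistent fixed point. -/
def IsCFP (w hf hg f g : ℝ → ℝ) : Prop :=
  ∀ x, f x ∈ Icc (Function.leftLim hf (convw g w x)) (Function.rightLim hf (convw g w x)) ∧
       g x ∈ Icc (Function.leftLim hg (convw f w x)) (Function.rightLim hg (convw f w x))

/-- Interval support condition with parameter `W ∈ (0,∞]`. -/
def IntervalSupport (w : ℝ → ℝ) (W : ℝ≥0∞) : Prop :=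
  ∀ x : ℝ, (ENNReal.ofReal |x| < W → 0 < w x) ∧ (W < ENNReal.ofReal |x| → w x = 0)

/-- The functional `L(f,g)`. -/
def Lfun (hf hg f g : ℝ → ℝ) : ℝ :=
  ∫ x, ((∫ v in (0:ℝ)..f x, geninv hf v) - ∫ u in (0:ℝ)..g x, (1 - geninv hg u))

/-!
Layer cake: for `F, G` with values in `[0,1]`, `F x - G x = ∫₀¹ (1{t < F x} - 1{t < G x}) dt`, so
by Fubini `∫ (F - G) = ∫₀¹ ∫ (1{t < F x} - 1{t < G x}) dx dt`. For fixed `t` the two level sets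
are null far to the left and full far to the right, and on a bracketing interval `(N, M]` the set
`{F > t}` has measure `M - (a_t - |A_t|)`. Hence `∫ (F - G) = ∫₀¹ (b_G - b_F)` with
`b_F(t) = a_t - |A_t|`. The rearrangement `p̄` is the increasing profile whose level fronts are
`b_p`, except at the countably many jumps of the monotone function `b_p`, so the same identity for
`p̄, q̄` gives the claim. Non-measurable profiles are first replaced by measurable envelopes whose
level sets have the same outer measure.
-/

open Topology

/-- The paper's `a_t - |A_t|`; `rearr f x` is the measure of `{t ∈ (0,1) : levelFront f t < x}`. -/
def levelFront (f : ℝ → ℝ) (t : ℝ) : ℝ :=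
  aT f t - (volume ({x | t < f x} \ Ioi (aT f t))).toReal

def LevelBracket (f : ℝ → ℝ) (t N M : ℝ) : Prop :=
  volume ({x | t < f x} ∩ Iic N) = 0 ∧ Ioi M ⊆ {x | t < f x}

def HasLevelBrackets (f : ℝ → ℝ) : Prop :=
  ∀ t ∈ Ioo (0 : ℝ) 1, ∃ N M, LevelBracket f t N M

namespace LevelBracket

variable {f : ℝ → ℝ} {t N M : ℝ}

theorem le_of_Ioi_subset (h : LevelBracket f t N M) {a : ℝ} (ha : Ioi a ⊆ {x | t < f x}) :
    N ≤ a := by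
  by_contra! hlt
  have hsub : Ioc a N ⊆ {x | t < f x} ∩ Iic N := fun x hx => ⟨ha hx.1, hx.2⟩
  have hnull := measure_mono_null hsub h.1
  simp only [Real.volume_Ioc, ENNReal.ofReal_eq_zero, sub_nonpos] at hnull
  linarith

theorem mono (h : LevelBracket f t N M) {N' M' : ℝ} (hN : N' ≤ N) (hM : M ≤ M') :
    LevelBracket f t N' M' :=
  ⟨measure_mono_null (inter_subset_inter_right _ (Iic_subset_Iic.2 hN)) h.1,
    (Ioi_subset_Ioi hM).trans h.2⟩

theorem aT_le (h : LevelBracket f t N M) : aT f t ≤ M :=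
  csInf_le ⟨N, fun _ ha => h.le_of_Ioi_subset ha⟩ h.2

theorem le_aT (h : LevelBracket f t N M) : N ≤ aT f t :=
  le_csInf ⟨M, h.2⟩ fun _ ha => h.le_of_Ioi_subset ha

theorem Ioi_aT_subset (h : LevelBracket f t N M) : Ioi (aT f t) ⊆ {x | t < f x} := by
  intro x hx
  obtain ⟨a, ha, hax⟩ := exists_lt_of_csInf_lt ⟨M, h.2⟩ hx
  exact ha hax

theorem volume_levelSet_diff_eq (h : LevelBracket f t N M) :
    volume ({x | t < f x} \ Ioi (aT f t)) =
      volume (({x | t < f x} \ Ioi (aT f t)) ∩ Ioc N (aT f t)) := by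
  set A := {x | t < f x} \ Ioi (aT f t)
  refine le_antisymm ?_ (measure_mono inter_subset_left)
  have hcover : A ⊆ (A ∩ Iic N) ∪ (A ∩ Ioc N (aT f t)) := fun x hx => by
    rcases le_or_gt x N with hxN | hxN
    · exact Or.inl ⟨hx, hxN⟩
    · exact Or.inr ⟨hx, hxN, not_lt.1 hx.2⟩
  calc volume A ≤ volume (A ∩ Iic N) + volume (A ∩ Ioc N (aT f t)) :=
        (measure_mono hcover).trans (measure_union_le _ _)
    _ = volume (A ∩ Ioc N (aT f t)) := by
        rw [measure_mono_null (inter_subset_inter_left _ sdiff_subset) h.1, zero_add]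

theorem volume_levelSet_diff_le (h : LevelBracket f t N M) :
    volume ({x | t < f x} \ Ioi (aT f t)) ≤ ENNReal.ofReal (aT f t - N) := by
  rw [h.volume_levelSet_diff_eq, ← Real.volume_Ioc]
  exact measure_mono inter_subset_right

theorem levelFront_le (h : LevelBracket f t N M) : levelFront f t ≤ M :=
  (sub_le_self _ ENNReal.toReal_nonneg).trans h.aT_le

/-- The level set in `(N, M]` is the bounded part `A_t` followed by the interval `(a_t, M]`. -/
theorem ofReal_sub_levelFront (h : LevelBracket f t N M) :
    ENNReal.ofReal (M - levelFront f t) = volume ({x | t < f x} ∩ Ioc N M) := by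
  set A := {x | t < f x} \ Ioi (aT f t)
  have hsplit : {x | t < f x} ∩ Ioc N M = (A ∩ Ioc N (aT f t)) ∪ Ioc (aT f t) M := by
    ext x
    constructor
    · rintro ⟨hxS, hxN, hxM⟩
      rcases le_or_gt x (aT f t) with hx | hx
      · exact Or.inl ⟨⟨hxS, not_lt.2 hx⟩, hxN, hx⟩
      · exact Or.inr ⟨hx, hxM⟩
    · rintro (⟨⟨hxS, -⟩, hxN, hxa⟩ | ⟨hxa, hxM⟩)
      · exact ⟨hxS, hxN, hxa.trans h.aT_le⟩
      · exact ⟨h.Ioi_aT_subset hxa, h.le_aT.trans_lt hxa, hxM⟩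
  have hdisj : Disjoint (A ∩ Ioc N (aT f t)) (Ioc (aT f t) M) :=
    Set.disjoint_left.2 fun x hx hx' => not_lt.2 hx.2.2 hx'.1
  have hfin : volume A ≠ ⊤ := ne_top_of_le_ne_top ENNReal.ofReal_ne_top h.volume_levelSet_diff_le
  have hM : M - levelFront f t = (volume A).toReal + (M - aT f t) := by
    unfold levelFront; ring
  rw [hsplit, measure_union hdisj measurableSet_Ioc, ← h.volume_levelSet_diff_eq,
    Real.volume_Ioc, hM, ENNReal.ofReal_add ENNReal.toReal_nonneg (sub_nonneg.2 h.aT_le),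
    ENNReal.ofReal_toReal hfin]

theorem levelFront_eq (hf : LevelBracket f t N M) {g : ℝ → ℝ} (hg : LevelBracket g t N M)
    (hfg : volume ({x | t < f x} ∩ Ioc N M) = volume ({x | t < g x} ∩ Ioc N M)) :
    levelFront f t = levelFront g t := by
  rw [← hf.ofReal_sub_levelFront, ← hg.ofReal_sub_levelFront,
    ENNReal.ofReal_eq_ofReal_iff (sub_nonneg.2 hf.levelFront_le)
      (sub_nonneg.2 hg.levelFront_le)] at hfg
  linarith

end LevelBracket

theorem hasLevelBrackets_of_tendsto {f : ℝ → ℝ} (h0 : Tendsto f atBot (𝓝 0))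
    (h1 : Tendsto f atTop (𝓝 1)) : HasLevelBrackets f := by
  intro t ht
  obtain ⟨N, hN⟩ := eventually_atBot.1 (h0.eventually (eventually_lt_nhds ht.1))
  obtain ⟨M, hM⟩ := eventually_atTop.1 (h1.eventually (eventually_gt_nhds ht.2))
  refine ⟨N, M, ?_, fun x hx => hM x hx.le⟩
  convert measure_empty (μ := volume)
  exact eq_empty_iff_forall_notMem.2 fun x hx => (hN x hx.2).not_gt hx.1

namespace HasLevelBrackets

variable {f : ℝ → ℝ}

theorem exists_common (hf : HasLevelBrackets f) {g : ℝ → ℝ} (hg : HasLevelBrackets g)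
    {t : ℝ} (ht : t ∈ Ioo (0 : ℝ) 1) :
    ∃ N M, LevelBracket f t N M ∧ LevelBracket g t N M := by
  obtain ⟨N, M, hfb⟩ := hf t ht
  obtain ⟨N', M', hgb⟩ := hg t ht
  exact ⟨min N N', max M M', hfb.mono (min_le_left _ _) (le_max_left _ _),
    hgb.mono (min_le_right _ _) (le_max_right _ _)⟩

/-- The level sets shrink as `t` grows, and `M - levelFront f t` measures them. -/
theorem monotoneOn_levelFront (hf : HasLevelBrackets f) :
    MonotoneOn (levelFront f) (Ioo (0 : ℝ) 1) := by
  intro t₁ ht₁ t₂ ht₂ ht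
  obtain ⟨N, _, hb₁⟩ := hf t₁ ht₁
  obtain ⟨_, M, hb₂⟩ := hf t₂ ht₂
  have hsub : {x | t₂ < f x} ⊆ {x | t₁ < f x} := fun x hx => ht.trans_lt hx
  have hb₁' : LevelBracket f t₁ N M := ⟨hb₁.1, hb₂.2.trans hsub⟩
  have hb₂' : LevelBracket f t₂ N M :=
    ⟨measure_mono_null (inter_subset_inter_left _ hsub) hb₁.1, hb₂.2⟩
  have hle : ENNReal.ofReal (M - levelFront f t₂) ≤ ENNReal.ofReal (M - levelFront f t₁) := by
    rw [hb₁'.ofReal_sub_levelFront, hb₂'.ofReal_sub_levelFront]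
    exact measure_mono (inter_subset_inter_left _ hsub)
  rw [ENNReal.ofReal_le_ofReal_iff (sub_nonneg.2 hb₁'.levelFront_le)] at hle
  linarith

end HasLevelBrackets

theorem setIntegral_Ioo_indicator_Iio {c : ℝ} (hc : c ∈ Icc (0 : ℝ) 1) :
    ∫ t in Ioo (0 : ℝ) 1, (Iio c).indicator 1 t = c := by
  have hset : Iio c ∩ Ioo (0 : ℝ) 1 = Ioo 0 c := by
    ext t
    simp only [mem_inter_iff, mem_Iio, mem_Ioo]
    constructor
    · rintro ⟨htc, ht0, -⟩
      exact ⟨ht0, htc⟩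
    · rintro ⟨ht0, htc⟩
      exact ⟨htc, ht0, htc.trans_le hc.2⟩
  rw [integral_indicator_one measurableSet_Iio, measureReal_restrict_apply measurableSet_Iio, hset,
    Real.volume_real_Ioo_of_le hc.1, sub_zero]

theorem setIntegral_Ioo_abs_indicator_Iio_sub {a b : ℝ} (ha : a ∈ Icc (0 : ℝ) 1)
    (hb : b ∈ Icc (0 : ℝ) 1) :
    ∫ t in Ioo (0 : ℝ) 1, |(Iio a).indicator 1 t - (Iio b).indicator 1 t| = |a - b| := by
  wlog hab : b ≤ a generalizing a b
  · simpa only [abs_sub_comm] using this hb ha (le_of_not_ge hab)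
  have hnonneg : ∀ t, 0 ≤ (Iio a).indicator (1 : ℝ → ℝ) t - (Iio b).indicator 1 t := fun t =>
    sub_nonneg.2 (indicator_le_indicator_of_subset (Iio_subset_Iio hab) (fun _ => zero_le_one) t)
  simp_rw [abs_of_nonneg (hnonneg _), abs_of_nonneg (sub_nonneg.2 hab)]
  rw [integral_sub ((integrable_const 1).indicator measurableSet_Iio)
    ((integrable_const 1).indicator measurableSet_Iio), setIntegral_Ioo_indicator_Iio ha,
    setIntegral_Ioo_indicator_Iio hb]

theorem integrable_indicator_one_inter_Ioc {s : Set ℝ} (hs : MeasurableSet s) (N M : ℝ) :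
    Integrable ((s ∩ Ioc N M).indicator (1 : ℝ → ℝ)) :=
  (integrable_indicator_iff (hs.inter measurableSet_Ioc)).2 <| integrableOn_const <|
    ne_top_of_le_ne_top (by simp [Real.volume_Ioc]) (measure_mono inter_subset_right)

theorem LevelBracket.integral_indicator_inter_Ioc {F : ℝ → ℝ} {t N M : ℝ}
    (h : LevelBracket F t N M) (hF : MeasurableSet {x | t < F x}) :
    ∫ x, ({x | t < F x} ∩ Ioc N M).indicator 1 x = M - levelFront F t := by
  rw [integral_indicator_one (hF.inter measurableSet_Ioc), measureReal_def,
    ← h.ofReal_sub_levelFront, ENNReal.toReal_ofReal (sub_nonneg.2 h.levelFront_le)]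

/-- Outside `(N, M]` the two level sets agree almost everywhere. -/
theorem integral_indicator_levelSet_sub {F G : ℝ → ℝ} (hF : Measurable F) (hG : Measurable G)
    {t N M : ℝ} (hFt : LevelBracket F t N M) (hGt : LevelBracket G t N M) :
    ∫ x, ({x | t < F x}.indicator 1 x - {x | t < G x}.indicator 1 x) =
      levelFront G t - levelFront F t := by
  have hFs : MeasurableSet {x | t < F x} := measurableSet_lt measurable_const hF
  have hGs : MeasurableSet {x | t < G x} := measurableSet_lt measurable_const hG
  have hae : (fun x => {x | t < F x}.indicator (1 : ℝ → ℝ) x - {x | t < G x}.indicator 1 x)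
      =ᵐ[volume] fun x =>
        ({x | t < F x} ∩ Ioc N M).indicator 1 x - ({x | t < G x} ∩ Ioc N M).indicator 1 x := by
    filter_upwards [measure_eq_zero_iff_ae_notMem.1 hFt.1, measure_eq_zero_iff_ae_notMem.1 hGt.1]
      with x hxF hxG
    rcases le_or_gt x N with hxN | hxN
    · have hF' : ¬ t < F x := fun h => hxF ⟨h, hxN⟩
      have hG' : ¬ t < G x := fun h => hxG ⟨h, hxN⟩
      simp [hF', hG']
    rcases le_or_gt x M with hxM | hxM
    · simp [indicator_apply, hxN, hxM]
    · simp [hFt.2 hxM, hGt.2 hxM, hxM.not_ge]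
  rw [integral_congr_ae hae, integral_sub (integrable_indicator_one_inter_Ioc hFs N M)
    (integrable_indicator_one_inter_Ioc hGs N M), hFt.integral_indicator_inter_Ioc hFs,
    hGt.integral_indicator_inter_Ioc hGs]
  ring

theorem integral_sub_eq_setIntegral_levelFront_sub_of_measurable {F G : ℝ → ℝ} (hF : Measurable F)
    (hG : Measurable G) (hF01 : ∀ x, F x ∈ Icc (0 : ℝ) 1) (hG01 : ∀ x, G x ∈ Icc (0 : ℝ) 1)
    (hFG : Integrable (fun x => F x - G x)) (hFb : HasLevelBrackets F)
    (hGb : HasLevelBrackets G) :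
    IntegrableOn (fun t => levelFront G t - levelFront F t) (Ioo (0 : ℝ) 1) ∧
      ∫ x, (F x - G x) = ∫ t in Ioo (0 : ℝ) 1, (levelFront G t - levelFront F t) := by
  have hI (c : ℝ) : Integrable ((Iio c).indicator (1 : ℝ → ℝ)) (volume.restrict (Ioo (0 : ℝ) 1)) :=
    (integrable_const 1).indicator measurableSet_Iio
  set H : ℝ × ℝ → ℝ := fun z => (Iio (F z.1)).indicator 1 z.2 - (Iio (G z.1)).indicator 1 z.2
  have hHm : Measurable H :=
    (measurable_const.indicator (measurableSet_lt measurable_snd (hF.comp measurable_fst))).sub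
      (measurable_const.indicator (measurableSet_lt measurable_snd (hG.comp measurable_fst)))
  have hslice_t : ∀ x, ∫ t in Ioo (0 : ℝ) 1, H (x, t) = F x - G x := fun x => by
    simp only [H]
    rw [integral_sub (hI _) (hI _), setIntegral_Ioo_indicator_Iio (hF01 x),
      setIntegral_Ioo_indicator_Iio (hG01 x)]
  have hslice_x : ∀ t ∈ Ioo (0 : ℝ) 1, ∫ x, H (x, t) = levelFront G t - levelFront F t :=
    fun t ht => by
      obtain ⟨N, M, hFt, hGt⟩ := hFb.exists_common hGb ht
      simp only [H, ← integral_indicator_levelSet_sub hF hG hFt hGt, indicator_apply, mem_Iio,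
        mem_ofPred_eq, Pi.one_apply]
  have hH : Integrable H (volume.prod (volume.restrict (Ioo (0 : ℝ) 1))) := by
    refine (integrable_prod_iff hHm.aestronglyMeasurable).2
      ⟨ae_of_all _ fun x => by simp only [H]; exact (hI (F x)).sub (hI (G x)), ?_⟩
    simp only [H, Real.norm_eq_abs, setIntegral_Ioo_abs_indicator_Iio_sub (hF01 _) (hG01 _)]
    exact hFG.abs
  refine ⟨hH.integral_prod_right.congr ((ae_restrict_iff' measurableSet_Ioo).2
    (ae_of_all _ hslice_x)), ?_⟩
  calc ∫ x, (F x - G x) = ∫ x, ∫ t in Ioo (0 : ℝ) 1, H (x, t) := by simp only [hslice_t]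
    _ = ∫ t in Ioo (0 : ℝ) 1, ∫ x, H (x, t) := integral_integral_swap hH
    _ = ∫ t in Ioo (0 : ℝ) 1, (levelFront G t - levelFront F t) :=
        setIntegral_congr_fun measurableSet_Ioo hslice_x

/-- Measurable hulls of the level sets `{f > s}`, intersected over `s < q` to make them
antitone in `q`. -/
def envelopeLevel (f : ℝ → ℝ) (q : ℚ) : Set ℝ :=
  ⋂ (s : ℚ) (_ : s < q), toMeasurable volume {y | (s : ℝ) < f y}

def envelopeSet (f : ℝ → ℝ) (x : ℝ) : Set ℝ :=
  insert 0 ((↑) '' {q : ℚ | (q : ℝ) ≤ 1 ∧ x ∈ envelopeLevel f q})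

/-- A measurable majorant of `f` whose level sets have the same outer measure as those of `f`
inside every measurable set. -/
def envelope (f : ℝ → ℝ) (x : ℝ) : ℝ := sSup (envelopeSet f x)

section Envelope

variable {f : ℝ → ℝ}

theorem measurableSet_envelopeLevel (f : ℝ → ℝ) (q : ℚ) : MeasurableSet (envelopeLevel f q) :=
  .iInter fun _ => .iInter fun _ => measurableSet_toMeasurable _ _

theorem antitone_envelopeLevel (f : ℝ → ℝ) : Antitone (envelopeLevel f) := fun _ _ hqq' =>
  biInter_mono (fun _ hs => lt_of_lt_of_le hs hqq') fun _ _ => subset_rfl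

theorem envelopeLevel_subset {q s : ℚ} (hsq : s < q) :
    envelopeLevel f q ⊆ toMeasurable volume {y | (s : ℝ) < f y} :=
  biInter_subset_of_mem hsq

theorem bddAbove_envelopeSet (f : ℝ → ℝ) (x : ℝ) : BddAbove (envelopeSet f x) := by
  refine ⟨1, ?_⟩
  rintro u (rfl | ⟨q, ⟨hq, -⟩, rfl⟩)
  exacts [zero_le_one, hq]

theorem envelope_nonneg (f : ℝ → ℝ) (x : ℝ) : 0 ≤ envelope f x :=
  le_csSup (bddAbove_envelopeSet f x) (mem_insert _ _)

theorem envelope_le_one (f : ℝ → ℝ) (x : ℝ) : envelope f x ≤ 1 := by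
  refine csSup_le (insert_nonempty _ _) ?_
  rintro u (rfl | ⟨q, ⟨hq, -⟩, rfl⟩)
  exacts [zero_le_one, hq]

theorem le_envelope (hf : ∀ x, f x ≤ 1) (x : ℝ) : f x ≤ envelope f x := by
  by_contra! hlt
  obtain ⟨q, hq, hqf⟩ := exists_rat_btwn hlt
  have hx : x ∈ envelopeLevel f q := mem_iInter₂.2 fun s hs =>
    subset_toMeasurable _ _ ((Rat.cast_lt.2 hs).trans hqf : (s : ℝ) < f x)
  have : (q : ℝ) ≤ envelope f x :=
    le_csSup (bddAbove_envelopeSet f x) (mem_insert_of_mem _ ⟨q, ⟨hqf.le.trans (hf x), hx⟩, rfl⟩)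
  linarith

theorem setOf_lt_envelope {t : ℝ} (ht : 0 ≤ t) :
    {x | t < envelope f x} = ⋃ q ∈ {q : ℚ | t < q ∧ (q : ℝ) ≤ 1}, envelopeLevel f q := by
  ext x
  simp only [mem_ofPred_eq, mem_iUnion, exists_prop]
  constructor
  · intro hx
    obtain ⟨u, hu, htu⟩ := exists_lt_of_lt_csSup (insert_nonempty _ _) hx
    rcases hu with rfl | ⟨q, ⟨hq, hxq⟩, rfl⟩
    · exact absurd ht (not_le.2 htu)
    · exact ⟨q, ⟨htu, hq⟩, hxq⟩
  · rintro ⟨q, ⟨htq, hq⟩, hxq⟩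
    exact htq.trans_le
      (le_csSup (bddAbove_envelopeSet f x) (mem_insert_of_mem _ ⟨q, ⟨hq, hxq⟩, rfl⟩))

theorem measurable_envelope (f : ℝ → ℝ) : Measurable (envelope f) := by
  refine measurable_of_Ioi fun t => ?_
  rcases lt_or_ge t 0 with ht | ht
  · convert MeasurableSet.univ
    exact eq_univ_of_forall fun x => ht.trans_le (envelope_nonneg f x)
  · rw [show envelope f ⁻¹' Ioi t = {x | t < envelope f x} from rfl, setOf_lt_envelope ht]
    exact .biUnion (to_countable _) fun q _ => measurableSet_envelopeLevel f q

theorem volume_setOf_lt_envelope_inter (hf : ∀ x, f x ≤ 1) {t : ℝ} (ht : 0 < t) {E : Set ℝ}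
    (hE : MeasurableSet E) :
    volume ({x | t < envelope f x} ∩ E) = volume ({x | t < f x} ∩ E) := by
  refine le_antisymm ?_ (measure_mono (inter_subset_inter_left _ fun x hx =>
    lt_of_lt_of_le hx (le_envelope hf x)))
  set S := {q : ℚ | t < q ∧ (q : ℝ) ≤ 1}
  have hdir : DirectedOn (Function.onFun (· ⊆ ·) fun q => envelopeLevel f q ∩ E) S :=
    fun i hi j hj =>
    ⟨min i j, ⟨by push_cast; exact lt_min hi.1 hj.1, by push_cast; exact min_le_of_left_le hi.2⟩,
      inter_subset_inter_left _ (antitone_envelopeLevel f (min_le_left i j)),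
      inter_subset_inter_left _ (antitone_envelopeLevel f (min_le_right i j))⟩
  rw [setOf_lt_envelope ht.le, iUnion₂_inter, measure_biUnion_eq_iSup (to_countable S) hdir]
  refine iSup₂_le fun q hq => ?_
  obtain ⟨s, hts, hsq⟩ := exists_rat_btwn hq.1
  calc volume (envelopeLevel f q ∩ E)
      ≤ volume (toMeasurable volume {y | (s : ℝ) < f y} ∩ E) :=
        measure_mono (inter_subset_inter_left _ (envelopeLevel_subset (Rat.cast_lt.1 hsq)))
    _ = volume ({y | (s : ℝ) < f y} ∩ E) := Measure.measure_toMeasurable_inter_of_sFinite hE _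
    _ ≤ volume ({x | t < f x} ∩ E) :=
        measure_mono (inter_subset_inter_left _ fun y hy => hts.trans hy)

theorem envelope_le_ae (hf : ∀ x, 0 ≤ f x) {h : ℝ → ℝ} (hh : Measurable h)
    (hfh : ∀ᵐ x, f x ≤ h x) : ∀ᵐ x, envelope f x ≤ h x := by
  have hnull (s : ℚ) : ∀ᵐ x, x ∉ toMeasurable volume {y | (s : ℝ) < f y} ∩ {x | h x < s} := by
    refine measure_eq_zero_iff_ae_notMem.1 ?_
    rw [Measure.measure_toMeasurable_inter_of_sFinite (measurableSet_lt hh measurable_const)]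
    refine measure_mono_null (fun y hy => ?_) (ae_iff.1 hfh)
    exact fun hle => (hle.trans_lt hy.2).not_gt hy.1
  filter_upwards [ae_all_iff.2 hnull, hfh] with x hx hfx
  refine csSup_le (insert_nonempty _ _) ?_
  rintro u (rfl | ⟨q, ⟨-, hxq⟩, rfl⟩)
  · exact (hf x).trans hfx
  · by_contra! hlt
    obtain ⟨s, hs, hsq⟩ := exists_rat_btwn hlt
    exact hx s ⟨envelopeLevel_subset (Rat.cast_lt.1 hsq) hxq, hs⟩

end Envelope

theorem levelBracket_envelope {f : ℝ → ℝ} (hf : ∀ x, f x ≤ 1) {t N M : ℝ} (ht : 0 < t)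
    (h : LevelBracket f t N M) : LevelBracket (envelope f) t N M :=
  ⟨(volume_setOf_lt_envelope_inter hf ht measurableSet_Iic).trans h.1,
    fun x hx => (h.2 hx).trans_le (le_envelope hf x)⟩

theorem levelFront_envelope {f : ℝ → ℝ} (hf : ∀ x, f x ≤ 1) {t N M : ℝ}
    (ht : 0 < t) (h : LevelBracket f t N M) : levelFront (envelope f) t = levelFront f t :=
  (levelBracket_envelope hf ht h).levelFront_eq h
    (volume_setOf_lt_envelope_inter hf ht measurableSet_Ioc)

theorem hasLevelBrackets_envelope {f : ℝ → ℝ} (hf : ∀ x, f x ≤ 1) (hb : HasLevelBrackets f) :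
    HasLevelBrackets (envelope f) := fun t ht => by
  obtain ⟨N, M, h⟩ := hb t ht
  exact ⟨N, M, levelBracket_envelope hf ht.1 h⟩

/-- `envelope p ≤ envelope q + (p - q)` a.e. because the right side is a measurable majorant
of `p`, and symmetrically. -/
theorem envelope_sub_envelope_ae_eq {p q : ℝ → ℝ} (hp : ∀ x, p x ∈ Icc (0 : ℝ) 1)
    (hq : ∀ x, q x ∈ Icc (0 : ℝ) 1) (hpq : AEMeasurable (fun x => p x - q x)) :
    (fun x => envelope p x - envelope q x) =ᵐ[volume] fun x => p x - q x := by
  have hd := hpq.ae_eq_mk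
  have hpq_le := envelope_le_ae (fun x => (hp x).1) (h := fun x => envelope q x + hpq.mk _ x)
    ((measurable_envelope q).add hpq.measurable_mk) <| by
      filter_upwards [hd] with x hx
      linarith [le_envelope (fun x => (hq x).2) x]
  have hqp_le := envelope_le_ae (fun x => (hq x).1) (h := fun x => envelope p x - hpq.mk _ x)
    ((measurable_envelope p).sub hpq.measurable_mk) <| by
      filter_upwards [hd] with x hx
      linarith [le_envelope (fun x => (hp x).2) x]
  filter_upwards [hd, hpq_le, hqp_le] with x hx h₁ h₂
  linarith

theorem integral_sub_eq_setIntegral_levelFront_sub {p q : ℝ → ℝ}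
    (hp : ∀ x, p x ∈ Icc (0 : ℝ) 1) (hq : ∀ x, q x ∈ Icc (0 : ℝ) 1)
    (hpb : HasLevelBrackets p) (hqb : HasLevelBrackets q) (hpq : Integrable (fun x => p x - q x)) :
    IntegrableOn (fun t => levelFront q t - levelFront p t) (Ioo (0 : ℝ) 1) ∧
      ∫ x, (p x - q x) = ∫ t in Ioo (0 : ℝ) 1, (levelFront q t - levelFront p t) := by
  have hp1 (x : ℝ) : p x ≤ 1 := (hp x).2
  have hq1 (x : ℝ) : q x ≤ 1 := (hq x).2
  have henv := envelope_sub_envelope_ae_eq hp hq hpq.aemeasurable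
  have hfront : EqOn (fun t => levelFront (envelope q) t - levelFront (envelope p) t)
      (fun t => levelFront q t - levelFront p t) (Ioo 0 1) := fun t ht => by
    obtain ⟨N, M, hpt, hqt⟩ := hpb.exists_common hqb ht
    simp only [levelFront_envelope hp1 ht.1 hpt, levelFront_envelope hq1 ht.1 hqt]
  obtain ⟨hint, heq⟩ := integral_sub_eq_setIntegral_levelFront_sub_of_measurable
    (measurable_envelope p) (measurable_envelope q)
    (fun x => ⟨envelope_nonneg p x, envelope_le_one p x⟩)
    (fun x => ⟨envelope_nonneg q x, envelope_le_one q x⟩)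
    (hpq.congr henv.symm) (hasLevelBrackets_envelope hp1 hpb) (hasLevelBrackets_envelope hq1 hqb)
  refine ⟨hint.congr_fun hfront measurableSet_Ioo, ?_⟩
  rw [← integral_congr_ae henv, heq, setIntegral_congr_fun measurableSet_Ioo hfront]

/-- The increasing profile whose level fronts are `β`, for `β` monotone on `(0,1)`. -/
def frontInv (β : ℝ → ℝ) (x : ℝ) : ℝ := sSup {t | t ∈ Ioo (0 : ℝ) 1 ∧ β t < x}

section FrontInv

variable {β : ℝ → ℝ}

theorem frontInv_nonneg (β : ℝ → ℝ) (x : ℝ) : 0 ≤ frontInv β x :=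
  Real.sSup_nonneg fun _ ht => ht.1.1.le

theorem frontInv_le_one (β : ℝ → ℝ) (x : ℝ) : frontInv β x ≤ 1 :=
  Real.sSup_le (fun _ ht => ht.1.2.le) zero_le_one

theorem lt_frontInv_iff {t : ℝ} (ht : 0 ≤ t) {x : ℝ} :
    t < frontInv β x ↔ ∃ s ∈ Ioo t 1, β s < x := by
  have hbdd : BddAbove {t | t ∈ Ioo (0 : ℝ) 1 ∧ β t < x} := ⟨1, fun _ hs => hs.1.2.le⟩
  constructor
  · intro htx
    rcases eq_empty_or_nonempty {t | t ∈ Ioo (0 : ℝ) 1 ∧ β t < x} with he | hne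
    · rw [frontInv, he, Real.sSup_empty] at htx
      exact absurd ht (not_le.2 htx)
    · obtain ⟨s, hs, hts⟩ := exists_lt_of_lt_csSup hne htx
      exact ⟨s, ⟨hts, hs.1.2⟩, hs.2⟩
  · rintro ⟨s, hs, hsx⟩
    exact hs.1.trans_le (le_csSup hbdd ⟨⟨ht.trans_lt hs.1, hs.2⟩, hsx⟩)

theorem monotone_frontInv (β : ℝ → ℝ) : Monotone (frontInv β) := fun x y hxy =>
  le_of_forall_lt fun c hc => by
    rcases lt_or_ge c 0 with hc0 | hc0
    · exact hc0.trans_le (frontInv_nonneg β y)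
    · obtain ⟨s, hs, hsx⟩ := (lt_frontInv_iff hc0).1 hc
      exact (lt_frontInv_iff hc0).2 ⟨s, hs, hsx.trans_le hxy⟩

/-- Monotonicity makes `{t ∈ (0,1) : β t < x}` an interval with left end `0`. -/
theorem volume_setOf_lt_eq_frontInv (hβ : MonotoneOn β (Ioo 0 1)) (x : ℝ) :
    volume {t | t ∈ Ioo (0 : ℝ) 1 ∧ β t < x} = ENNReal.ofReal (frontInv β x) := by
  set T := {t | t ∈ Ioo (0 : ℝ) 1 ∧ β t < x}
  rcases eq_empty_or_nonempty T with he | hne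
  · have h0 : frontInv β x = 0 := (congrArg sSup he).trans Real.sSup_empty
    rw [he, h0, measure_empty, ENNReal.ofReal_zero]
  have hbdd : BddAbove T := ⟨1, fun _ hs => hs.1.2.le⟩
  have hsub : T ⊆ Ioc 0 (frontInv β x) := fun t ht => ⟨ht.1.1, le_csSup hbdd ht⟩
  have hsup : Ioo 0 (frontInv β x) ⊆ T := fun t ht => by
    obtain ⟨s, hs, hts⟩ := exists_lt_of_lt_csSup hne ht.2
    have ht01 : t ∈ Ioo (0 : ℝ) 1 := ⟨ht.1, hts.trans hs.1.2⟩
    exact ⟨ht01, (hβ ht01 hs.1 hts.le).trans_lt hs.2⟩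
  refine le_antisymm ((measure_mono hsub).trans_eq ?_) (le_trans (le_of_eq ?_) (measure_mono hsup))
  · rw [Real.volume_Ioc, sub_zero]
  · rw [Real.volume_Ioo, sub_zero]

theorem rearr_eq_frontInv {f : ℝ → ℝ} (hf : MonotoneOn (levelFront f) (Ioo 0 1)) :
    rearr f = frontInv (levelFront f) := funext fun x => by
  change (volume {t | t ∈ Ioo (0 : ℝ) 1 ∧ levelFront f t < x}).toReal = _
  rw [volume_setOf_lt_eq_frontInv hf, ENNReal.toReal_ofReal (frontInv_nonneg _ _)]

theorem le_sInf_image_Ioo (hβ : MonotoneOn β (Ioo 0 1)) {t : ℝ} (ht : t ∈ Ioo (0 : ℝ) 1) :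
    β t ≤ sInf (β '' Ioo t 1) :=
  le_csInf ((nonempty_Ioo.2 ht.2).image β) <| by
    rintro _ ⟨s, hs, rfl⟩
    exact hβ ht ⟨ht.1.trans hs.1, hs.2⟩ hs.1.le

theorem sInf_image_Ioo_le (hβ : MonotoneOn β (Ioo 0 1)) {t s : ℝ} (ht : t ∈ Ioo (0 : ℝ) 1)
    (hs : s ∈ Ioo t 1) : sInf (β '' Ioo t 1) ≤ β s :=
  csInf_le ⟨β t, by rintro _ ⟨s, hs, rfl⟩; exact hβ ht ⟨ht.1.trans hs.1, hs.2⟩ hs.1.le⟩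
    (mem_image_of_mem β hs)

theorem setOf_lt_frontInv (hβ : MonotoneOn β (Ioo 0 1)) {t : ℝ} (ht : t ∈ Ioo (0 : ℝ) 1) :
    {x | t < frontInv β x} = Ioi (sInf (β '' Ioo t 1)) := by
  ext x
  rw [mem_ofPred_eq, lt_frontInv_iff ht.1.le, mem_Ioi]
  constructor
  · rintro ⟨s, hs, hsx⟩
    exact (sInf_image_Ioo_le hβ ht hs).trans_lt hsx
  · intro hx
    obtain ⟨_, ⟨s, hs, rfl⟩, hsx⟩ := exists_lt_of_csInf_lt ((nonempty_Ioo.2 ht.2).image β) hx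
    exact ⟨s, hs, hsx⟩

theorem levelFront_frontInv (hβ : MonotoneOn β (Ioo 0 1)) {t : ℝ} (ht : t ∈ Ioo (0 : ℝ) 1) :
    levelFront (frontInv β) t = sInf (β '' Ioo t 1) := by
  have haT : aT (frontInv β) t = sInf (β '' Ioo t 1) := by
    rw [aT, setOf_lt_frontInv hβ ht]
    simp only [Ioi_subset_Ioi_iff]
    exact csInf_Ici
  rw [levelFront, haT, setOf_lt_frontInv hβ ht, sdiff_self, measure_empty, ENNReal.toReal_zero,
    sub_zero]

theorem hasLevelBrackets_frontInv (hβ : MonotoneOn β (Ioo 0 1)) :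
    HasLevelBrackets (frontInv β) := fun t ht => by
  have hmid : (t + 1) / 2 ∈ Ioo t 1 := ⟨by linarith [ht.2], by linarith [ht.2]⟩
  refine ⟨β t, β ((t + 1) / 2), ?_, ?_⟩
  · convert measure_empty (μ := volume)
    rw [setOf_lt_frontInv hβ ht, Ioi_inter_Iic]
    exact Ioc_eq_empty (not_lt.2 (le_sInf_image_Ioo hβ ht))
  · rw [setOf_lt_frontInv hβ ht]
    exact Ioi_subset_Ioi (sInf_image_Ioo_le hβ ht hmid)

/-- Between `β t` and its right limit there is a rational, and distinct `t` get distinct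
rationals. -/
theorem countable_setOf_ne_sInf_image_Ioo (hβ : MonotoneOn β (Ioo 0 1)) :
    {t | t ∈ Ioo (0 : ℝ) 1 ∧ β t ≠ sInf (β '' Ioo t 1)}.Countable := by
  set J : ℚ → Set ℝ := fun r => {t | t ∈ Ioo (0 : ℝ) 1 ∧ β t < r ∧ r < sInf (β '' Ioo t 1)}
  have hJ (r : ℚ) : (J r).Subsingleton := by
    have hlt : ∀ t₁ ∈ J r, ∀ t₂ ∈ J r, ¬ t₁ < t₂ := fun t₁ h₁ t₂ h₂ h12 =>
      ((sInf_image_Ioo_le hβ h₁.1 ⟨h12, h₂.1.2⟩).trans_lt h₂.2.1).not_gt h₁.2.2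
    exact fun t₁ h₁ t₂ h₂ => le_antisymm (not_lt.1 (hlt t₂ h₂ t₁ h₁)) (not_lt.1 (hlt t₁ h₁ t₂ h₂))
  refine (countable_iUnion fun r => (hJ r).countable).mono fun t ⟨ht, hne⟩ => ?_
  obtain ⟨r, hr⟩ := exists_rat_btwn ((le_sInf_image_Ioo hβ ht).lt_of_ne hne)
  exact mem_iUnion.2 ⟨r, ht, hr⟩

theorem ae_levelFront_frontInv (hβ : MonotoneOn β (Ioo 0 1)) :
    ∀ᵐ t, t ∈ Ioo (0 : ℝ) 1 → levelFront (frontInv β) t = β t := by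
  rw [ae_iff]
  refine measure_mono_null (fun t ht => ?_)
    ((countable_setOf_ne_sInf_image_Ioo hβ).measure_zero volume)
  simp only [mem_ofPred_eq, Classical.not_imp] at ht
  exact ⟨ht.1, fun h => ht.2 ((levelFront_frontInv hβ ht.1).trans h.symm)⟩

end FrontInv

theorem MonotoneOn.measurable_indicator {f : ℝ → ℝ} {s : Set ℝ} (hs : MeasurableSet s)
    (hf : MonotoneOn f s) : Measurable (s.indicator f) := by
  refine measurable_of_restrict_of_restrict_compl hs ?_ ?_
  · have hmono : Monotone (s.domRestrict (s.indicator f)) := fun x y hxy => by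
      simpa only [domRestrict_apply, indicator_of_mem x.2, indicator_of_mem y.2] using
        hf x.2 y.2 hxy
    exact hmono.measurable
  · have hzero : sᶜ.domRestrict (s.indicator f) = 0 := funext fun x => indicator_of_notMem x.2 f
    rw [hzero]
    exact measurable_const

theorem norm_indicator_Ioi_sub_indicator_Ioi (a b x : ℝ) :
    ‖(Ioi a).indicator (1 : ℝ → ℝ) x - (Ioi b).indicator 1 x‖ =
      (Ioc (min a b) (max a b)).indicator 1 x := by
  wlog hab : a ≤ b generalizing a b
  · rw [norm_sub_rev, min_comm, max_comm]
    exact this b a (le_of_not_ge hab)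
  rw [min_eq_left hab, max_eq_right hab, ← Ioi_sdiff_Ioi, indicator_sdiff (Ioi_subset_Ioi hab)]
  exact Real.norm_of_nonneg (sub_nonneg.2 (indicator_le_indicator_of_subset
    (Ioi_subset_Ioi hab) (fun _ => zero_le_one) x))

theorem integrable_indicator_Ioi_sub_indicator_Ioi (a b : ℝ) :
    Integrable fun x => (Ioi a).indicator (1 : ℝ → ℝ) x - (Ioi b).indicator 1 x := by
  refine Integrable.mono' ((integrable_indicator_iff measurableSet_Ioc).2
    (integrableOn_const (by simp [Real.volume_Ioc]))) ?_
    (ae_of_all _ fun x => (norm_indicator_Ioi_sub_indicator_Ioi a b x).le)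
  exact ((measurable_const.indicator measurableSet_Ioi).sub
    (measurable_const.indicator measurableSet_Ioi)).aestronglyMeasurable

theorem integral_norm_indicator_Ioi_sub_indicator_Ioi (a b : ℝ) :
    ∫ x, ‖(Ioi a).indicator (1 : ℝ → ℝ) x - (Ioi b).indicator 1 x‖ = |a - b| := by
  simp only [norm_indicator_Ioi_sub_indicator_Ioi, integral_indicator_one measurableSet_Ioc,
    Real.volume_real_Ioc_of_le min_le_max, max_sub_min_eq_abs']

theorem volume_restrict_setOf_indicator_lt_eq_frontInv {β : ℝ → ℝ}
    (hβ : MonotoneOn β (Ioo 0 1)) (x : ℝ) :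
    volume.restrict (Ioo (0 : ℝ) 1) {t | (Ioo 0 1).indicator β t < x} =
      ENNReal.ofReal (frontInv β x) := by
  rw [Measure.restrict_apply' measurableSet_Ioo, ← volume_setOf_lt_eq_frontInv hβ]
  congr 1
  ext t
  simp only [mem_inter_iff, mem_ofPred_eq]
  constructor
  · rintro ⟨hx, ht⟩
    exact ⟨ht, by rwa [indicator_of_mem ht] at hx⟩
  · rintro ⟨ht, hx⟩
    exact ⟨by rwa [indicator_of_mem ht], ht⟩

/-- Fubini again, now slicing `1{β₁ t < x} - 1{β₂ t < x}` in `x`, where the slices are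
intervals of length `|β₁ t - β₂ t|`. -/
theorem integrable_frontInv_sub {β₁ β₂ : ℝ → ℝ} (h₁ : MonotoneOn β₁ (Ioo 0 1))
    (h₂ : MonotoneOn β₂ (Ioo 0 1)) (hint : IntegrableOn (fun t => β₂ t - β₁ t) (Ioo 0 1)) :
    Integrable (fun x => frontInv β₁ x - frontInv β₂ x) := by
  set b₁ := (Ioo (0 : ℝ) 1).indicator β₁
  set b₂ := (Ioo (0 : ℝ) 1).indicator β₂
  have hb₁ : Measurable b₁ := h₁.measurable_indicator measurableSet_Ioo
  have hb₂ : Measurable b₂ := h₂.measurable_indicator measurableSet_Ioo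
  set K : ℝ × ℝ → ℝ := fun z => (Ioi (b₁ z.1)).indicator 1 z.2 - (Ioi (b₂ z.1)).indicator 1 z.2
  have hKm : Measurable K :=
    (measurable_const.indicator (measurableSet_lt (hb₁.comp measurable_fst) measurable_snd)).sub
      (measurable_const.indicator (measurableSet_lt (hb₂.comp measurable_fst) measurable_snd))
  have hK : Integrable K ((volume.restrict (Ioo (0 : ℝ) 1)).prod volume) := by
    refine (integrable_prod_iff hKm.aestronglyMeasurable).2
      ⟨ae_of_all _ fun t => by simp only [K]; exact integrable_indicator_Ioi_sub_indicator_Ioi _ _,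
        ?_⟩
    simp only [K, integral_norm_indicator_Ioi_sub_indicator_Ioi]
    refine hint.abs.congr ((ae_restrict_iff' measurableSet_Ioo).2 (ae_of_all _ fun t ht => ?_))
    simp only [b₁, b₂, indicator_of_mem ht, abs_sub_comm]
  have hslice (x : ℝ) : ∫ t in Ioo (0 : ℝ) 1, K (t, x) = frontInv β₁ x - frontInv β₂ x := by
    have hs₁ : MeasurableSet {t | b₁ t < x} := measurableSet_lt hb₁ measurable_const
    have hs₂ : MeasurableSet {t | b₂ t < x} := measurableSet_lt hb₂ measurable_const
    have hK_eq : (fun t => K (t, x)) =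
        fun t => {t | b₁ t < x}.indicator (1 : ℝ → ℝ) t - {t | b₂ t < x}.indicator 1 t := by
      ext t
      simp only [K, indicator_apply, mem_Ioi, mem_ofPred_eq, Pi.one_apply]
    rw [hK_eq, integral_sub ((integrable_const 1).indicator hs₁)
      ((integrable_const 1).indicator hs₂), integral_indicator_one hs₁, integral_indicator_one hs₂,
      measureReal_def, measureReal_def, volume_restrict_setOf_indicator_lt_eq_frontInv h₁,
      volume_restrict_setOf_indicator_lt_eq_frontInv h₂,
      ENNReal.toReal_ofReal (frontInv_nonneg _ _), ENNReal.toReal_ofReal (frontInv_nonneg _ _)]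
  simpa only [hslice] using hK.integral_prod_right

/-- If `p, q` are interpolating profiles with `p - q` Lebesgue integrable,
then `∫ (p - q) = ∫ (p̄ - q̄)` where `p̄, q̄` are the increasing rearrangements. -/
theorem stmt4 (p q : ℝ → ℝ) (hp : IsProfile p) (hq : IsProfile q)
    (hint : Integrable (fun x => p x - q x)) :
    ∫ x, (p x - q x) = ∫ x, (rearr p x - rearr q x) := by
  have hpb := hasLevelBrackets_of_tendsto hp.2.1 hp.2.2
  have hqb := hasLevelBrackets_of_tendsto hq.2.1 hq.2.2
  have hpm := hpb.monotoneOn_levelFront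
  have hqm := hqb.monotoneOn_levelFront
  obtain ⟨hfront, hlayer⟩ := integral_sub_eq_setIntegral_levelFront_sub hp.1 hq.1 hpb hqb hint
  obtain ⟨-, hlayer'⟩ := integral_sub_eq_setIntegral_levelFront_sub_of_measurable
    (monotone_frontInv _).measurable (monotone_frontInv _).measurable
    (fun x => ⟨frontInv_nonneg _ x, frontInv_le_one _ x⟩)
    (fun x => ⟨frontInv_nonneg _ x, frontInv_le_one _ x⟩)
    (integrable_frontInv_sub hpm hqm hfront) (hasLevelBrackets_frontInv hpm)
    (hasLevelBrackets_frontInv hqm)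
  rw [rearr_eq_frontInv hpm, rearr_eq_frontInv hqm, hlayer, hlayer']
  refine setIntegral_congr_ae measurableSet_Ioo ?_
  filter_upwards [ae_levelFront_frontInv hpm, ae_levelFront_frontInv hqm] with t hpt hqt ht
  rw [hpt ht, hqt ht]
end
end

section
/- Assume C_w < ∞. Let f, g be nondecreasing right-continuous interpolating profiles each saturated off some finite interval [-K,K]. Then ∫_ℝ (1 - f^w(x)) g(x) dx = ∬_{ℝ²} V(x-y) df(x) dg(y), where df, dg denote the Lebesgue–Stieltjes measures associated with f and g. -/
open MeasureTheory Filter Set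
open scoped ENNReal

noncomputable section

/-!
With `μ = df` and `ν = dg` (probability measures, since `f` and `g` interpolate), `f y = μ (Iic y)`,
so Tonelli gives `f^w(x) = ∫ Ω(x - x') dμ(x')`, and evenness of `w` (`Ω s + Ω (-s) = 1`) turns this
into `1 - f^w(x) = ∫ Ω(x' - x) dμ(x')`. Writing `g x = ν (Iic x)` and integrating in `x` first,
`∫_{x ≥ y'} Ω(x' - x) dx = V(x' - y')`. All of this is done in `ℝ≥0∞`, where Tonelli needs no
integrability; `C_w < ∞` makes `V` finite and `g = 0` far to the left makes the inner integrals
finite, so the real integrals of the statement are the real parts of the extended ones.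
-/

def iicLIntegral (h : ℝ → ℝ≥0∞) (s : ℝ) : ℝ≥0∞ := ∫⁻ z in Iic s, h z

theorem iicLIntegral_mono (h : ℝ → ℝ≥0∞) : Monotone (iicLIntegral h) := fun _ _ hst =>
  lintegral_mono_set (Iic_subset_Iic.2 hst)

theorem measurable_iicLIntegral (h : ℝ → ℝ≥0∞) : Measurable (iicLIntegral h) :=
  (iicLIntegral_mono h).measurable

theorem setLIntegral_Ici_comp_sub_left (h : ℝ → ℝ≥0∞) (a b : ℝ) :
    ∫⁻ y in Ici b, h (a - y) = iicLIntegral h (a - b) := by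
  rw [iicLIntegral, ← lintegral_indicator measurableSet_Ici,
    ← lintegral_indicator measurableSet_Iic, ← lintegral_sub_left_eq_self _ a]
  congr 1 with y
  simp only [indicator, mem_Ici, mem_Iic, le_sub_comm, sub_sub_cancel]

theorem lintegral_measure_Iic_mul_comp_sub (ν : Measure ℝ) [SFinite ν] {h : ℝ → ℝ≥0∞}
    (hh : AEMeasurable h) (a : ℝ) :
    ∫⁻ x, ν (Iic x) * h (a - x) = ∫⁻ y, iicLIntegral h (a - y) ∂ν := by
  set F : ℝ × ℝ → ℝ≥0∞ := {p | p.2 ≤ p.1}.indicator fun p => h (a - p.1)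
  have hF : AEMeasurable F (volume.prod ν) :=
    (hh.comp_quasiMeasurePreserving (quasiMeasurePreserving_sub_left volume a)).comp_fst.indicator
      (measurableSet_le measurable_snd measurable_fst)
  calc ∫⁻ x, ν (Iic x) * h (a - x) = ∫⁻ x, ∫⁻ y, F (x, y) ∂ν := by
        congr 1 with x
        rw [mul_comm, ← lintegral_indicator_const measurableSet_Iic]
        rfl
    _ = ∫⁻ y, ∫⁻ x, F (x, y) ∂volume ∂ν := lintegral_lintegral_swap hF
    _ = ∫⁻ y, iicLIntegral h (a - y) ∂ν := by
        congr 1 with y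
        rw [← setLIntegral_Ici_comp_sub_left, ← lintegral_indicator measurableSet_Ici]
        rfl

theorem iicLIntegral_iicLIntegral {h : ℝ → ℝ≥0∞} (hh : AEMeasurable h) (a : ℝ) :
    iicLIntegral (iicLIntegral h) a = ∫⁻ z, ENNReal.ofReal (a - z) * h z := by
  -- the distribution function of Lebesgue measure on `Ici 0` is `x ↦ max x 0`
  have hIic (x : ℝ) : volume.restrict (Ici 0) (Iic x) = ENNReal.ofReal x := by
    rw [Measure.restrict_apply measurableSet_Iic, Iic_inter_Ici, Real.volume_Icc, sub_zero]
  have := lintegral_measure_Iic_mul_comp_sub (volume.restrict (Ici 0)) hh a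
  simp only [hIic] at this
  rw [← sub_zero a, ← setLIntegral_Ici_comp_sub_left, sub_zero, ← this,
    ← lintegral_sub_left_eq_self _ a]
  simp only [sub_sub_cancel]

theorem lintegral_lintegral_comp_sub_mul_measure_Iic (μ ν : Measure ℝ) [SFinite μ] [SFinite ν]
    {h : ℝ → ℝ≥0∞} (hh : Measurable h) :
    ∫⁻ x, (∫⁻ x', h (x' - x) ∂μ) * ν (Iic x) = ∫⁻ x', ∫⁻ y, iicLIntegral h (x' - y) ∂ν ∂μ := by
  have hν : Measurable fun x => ν (Iic x) :=
    Monotone.measurable fun _ _ hxy => measure_mono (Iic_subset_Iic.2 hxy)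
  calc ∫⁻ x, (∫⁻ x', h (x' - x) ∂μ) * ν (Iic x)
      = ∫⁻ x, ∫⁻ x', ν (Iic x) * h (x' - x) ∂μ := by
        congr 1 with x
        rw [mul_comm, ← lintegral_const_mul _ (by fun_prop : Measurable fun x' => h (x' - x))]
    _ = ∫⁻ x', ∫⁻ x, ν (Iic x) * h (x' - x) ∂volume ∂μ :=
        lintegral_lintegral_swap
          ((hν.comp measurable_fst).mul (hh.comp (measurable_snd.sub measurable_fst))).aemeasurable
    _ = ∫⁻ x', ∫⁻ y, iicLIntegral h (x' - y) ∂ν ∂μ := by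
        congr 1 with x'
        exact lintegral_measure_Iic_mul_comp_sub ν hh.aemeasurable x'

theorem lintegral_comp_sub_lt_top {h : ℝ → ℝ≥0∞} (hmono : Monotone h) (hfin : ∀ t, h t < ∞)
    (ν : Measure ℝ) [IsFiniteMeasure ν] {a : ℝ} (hν : ∀ᵐ y ∂ν, a < y) (x : ℝ) :
    ∫⁻ y, h (x - y) ∂ν < ∞ :=
  calc ∫⁻ y, h (x - y) ∂ν ≤ ∫⁻ _, h (x - a) ∂ν :=
        lintegral_mono_ae (hν.mono fun y hy => hmono (by linarith))
    _ < ∞ := by simpa using ENNReal.mul_lt_top (hfin _) (measure_lt_top ν univ)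

theorem StieltjesFunction.ae_lt_of_eq_zero (G : StieltjesFunction ℝ)
    (hG : Tendsto G atBot (nhds 0)) {a : ℝ} (ha : G a = 0) : ∀ᵐ y ∂G.measure, a < y := by
  have hIic : {y | ¬a < y} = Iic a := by ext; simp
  rw [ae_iff, hIic, G.measure_Iic hG, ha, sub_zero, ENNReal.ofReal_zero]

theorem convw_eq_toReal_lintegral {w : ℝ → ℝ} (hw0 : ∀ x, 0 ≤ w x) (hwm : AEMeasurable w)
    (F : StieltjesFunction ℝ) (hF : Tendsto F atBot (nhds 0)) (hF0 : ∀ x, 0 ≤ F x) (x : ℝ) :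
    convw F w x =
      (∫⁻ x', iicLIntegral (fun z => ENNReal.ofReal (w z)) (x - x') ∂F.measure).toReal := by
  have hwx : AEMeasurable (fun y => w (x - y)) :=
    hwm.comp_quasiMeasurePreserving (quasiMeasurePreserving_sub_left volume x)
  rw [convw, integral_eq_lintegral_of_nonneg_ae (.of_forall fun y => mul_nonneg (hF0 y) (hw0 _))
      (F.mono.measurable.aestronglyMeasurable.mul hwx.aestronglyMeasurable),
    ← lintegral_measure_Iic_mul_comp_sub F.measure hwm.ennreal_ofReal x]
  simp_rw [F.measure_Iic hF, sub_zero, ENNReal.ofReal_mul (hF0 _)]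

section Window

variable {w : ℝ → ℝ}

local notation "W" => fun z => ENNReal.ofReal (w z)

theorem IsWindow.lintegral_ofReal (hw : IsWindow w) : ∫⁻ z, ENNReal.ofReal (w z) = 1 := by
  rw [← ofReal_integral_eq_lintegral_ofReal hw.integrable (.of_forall hw.nonneg), hw.normalized,
    ENNReal.ofReal_one]

theorem IsWindow.iicLIntegral_add_neg (hw : IsWindow w) (s : ℝ) :
    iicLIntegral W s + iicLIntegral W (-s) = 1 := by
  have hneg : iicLIntegral W (-s) = ∫⁻ z in Ioi s, ENNReal.ofReal (w z) := by
    rw [← zero_sub, ← setLIntegral_Ici_comp_sub_left, restrict_Ioi_eq_restrict_Ici]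
    simp only [zero_sub, hw.even]
  rw [hneg, iicLIntegral, ← compl_Iic, lintegral_add_compl _ measurableSet_Iic, hw.lintegral_ofReal]

theorem IsWindow.iicLIntegral_le_one (hw : IsWindow w) (s : ℝ) : iicLIntegral W s ≤ 1 :=
  hw.iicLIntegral_add_neg s ▸ le_self_add

theorem IsWindow.Vker_eq_toReal (hw : IsWindow w) (t : ℝ) :
    Vker w t = (iicLIntegral (iicLIntegral W) t).toReal := by
  have hOm (s : ℝ) : Om w s = (iicLIntegral W s).toReal :=
    integral_eq_lintegral_of_nonneg_ae (.of_forall hw.nonneg)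
      hw.integrable.aestronglyMeasurable.restrict
  simp_rw [Vker, hOm]
  exact integral_toReal (measurable_iicLIntegral _).aemeasurable
    (.of_forall fun s => (hw.iicLIntegral_le_one s).trans_lt ENNReal.one_lt_top)

theorem IsWindow.iicLIntegral_iicLIntegral_lt_top (hw : IsWindow w)
    (hCw : Integrable fun x => |x| * w x) (t : ℝ) : iicLIntegral (iicLIntegral W) t < ∞ := by
  have hW : AEMeasurable W := hw.integrable.aemeasurable.ennreal_ofReal
  have hbound (z : ℝ) : ENNReal.ofReal (t - z) * ENNReal.ofReal (w z) ≤
      ENNReal.ofReal |t| * ENNReal.ofReal (w z) + ENNReal.ofReal (|z| * w z) := by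
    rw [ENNReal.ofReal_mul (abs_nonneg z), ← add_mul, ← ENNReal.ofReal_add (abs_nonneg t)
      (abs_nonneg z)]
    gcongr
    linarith [le_abs_self t, neg_abs_le z]
  calc iicLIntegral (iicLIntegral W) t
      = ∫⁻ z, ENNReal.ofReal (t - z) * ENNReal.ofReal (w z) := iicLIntegral_iicLIntegral hW t
    _ ≤ ∫⁻ z, (ENNReal.ofReal |t| * ENNReal.ofReal (w z) + ENNReal.ofReal (|z| * w z)) :=
        lintegral_mono hbound
    _ = ENNReal.ofReal |t| + ∫⁻ z, ENNReal.ofReal (|z| * w z) := by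
        rw [lintegral_add_left' (hW.const_mul _), lintegral_const_mul' _ _ ENNReal.ofReal_ne_top,
          hw.lintegral_ofReal, mul_one]
    _ < ∞ := ENNReal.add_lt_top.2 ⟨ENNReal.ofReal_lt_top, hCw.lintegral_lt_top⟩

theorem IsWindow.one_sub_convw_eq (hw : IsWindow w) (F : StieltjesFunction ℝ)
    (hFbot : Tendsto F atBot (nhds 0)) (hFtop : Tendsto F atTop (nhds 1)) (hF0 : ∀ x, 0 ≤ F x)
    (x : ℝ) :
    1 - convw F w x = (∫⁻ x', iicLIntegral W (x' - x) ∂F.measure).toReal := by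
  have := F.isProbabilityMeasure hFbot hFtop
  have hsum : ∫⁻ x', iicLIntegral W (x - x') ∂F.measure +
      ∫⁻ x', iicLIntegral W (x' - x) ∂F.measure = 1 := by
    have hmeas : Measurable fun x' => iicLIntegral W (x - x') :=
      (measurable_iicLIntegral _).comp (measurable_const.sub measurable_id)
    rw [← lintegral_add_left hmeas]
    simp_rw [← neg_sub x, hw.iicLIntegral_add_neg, lintegral_const, measure_univ, one_mul]
  obtain ⟨hA, hB⟩ := ENNReal.add_ne_top.1 (hsum ▸ ENNReal.one_ne_top)
  rw [convw_eq_toReal_lintegral hw.nonneg hw.integrable.aemeasurable F hFbot hF0,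
    sub_eq_iff_eq_add', ← ENNReal.toReal_add hA hB, hsum, ENNReal.toReal_one]

theorem IsWindow.integral_one_sub_convw_mul (hw : IsWindow w) (F G : StieltjesFunction ℝ)
    (hFbot : Tendsto F atBot (nhds 0)) (hFtop : Tendsto F atTop (nhds 1)) (hF0 : ∀ x, 0 ≤ F x)
    (hGbot : Tendsto G atBot (nhds 0)) (hG0 : ∀ x, 0 ≤ G x) :
    ∫ x, (1 - convw F w x) * G x =
      (∫⁻ x, (∫⁻ x', iicLIntegral W (x' - x) ∂F.measure) * G.measure (Iic x)).toReal := by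
  have hmeas :
      Measurable fun x => (∫⁻ x', iicLIntegral W (x' - x) ∂F.measure) * G.measure (Iic x) :=
    ((measurable_iicLIntegral _).comp (measurable_snd.sub measurable_fst)).lintegral_prod_right'.mul
      (Monotone.measurable fun _ _ h => measure_mono (Iic_subset_Iic.2 h))
  have hfin (x : ℝ) : (∫⁻ x', iicLIntegral W (x' - x) ∂F.measure) * G.measure (Iic x) < ∞ := by
    have := F.isProbabilityMeasure hFbot hFtop
    refine ENNReal.mul_lt_top ?_ (by simp [G.measure_Iic hGbot])
    exact (lintegral_mono fun _ => hw.iicLIntegral_le_one _).trans_lt (by simp)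
  rw [← integral_toReal hmeas.aemeasurable (.of_forall hfin)]
  congr 1 with x
  rw [hw.one_sub_convw_eq F hFbot hFtop hF0, G.measure_Iic hGbot, sub_zero, ENNReal.toReal_mul,
    ENNReal.toReal_ofReal (hG0 x)]

theorem IsWindow.integral_integral_Vker_comp_sub (hw : IsWindow w)
    (hCw : Integrable fun x => |x| * w x) (μ ν : Measure ℝ) [IsFiniteMeasure ν] {a : ℝ}
    (hν : ∀ᵐ y ∂ν, a < y) :
    ∫ x, ∫ y, Vker w (x - y) ∂ν ∂μ =
      (∫⁻ x, ∫⁻ y, iicLIntegral (iicLIntegral W) (x - y) ∂ν ∂μ).toReal := by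
  have hmeas : Measurable fun p : ℝ × ℝ => iicLIntegral (iicLIntegral W) (p.1 - p.2) :=
    (measurable_iicLIntegral _).comp (measurable_fst.sub measurable_snd)
  have hfin := hw.iicLIntegral_iicLIntegral_lt_top hCw
  simp_rw [hw.Vker_eq_toReal]
  rw [← integral_toReal hmeas.lintegral_prod_right'.aemeasurable
    (.of_forall (lintegral_comp_sub_lt_top (iicLIntegral_mono _) hfin ν hν))]
  congr 1 with x
  exact integral_toReal (hmeas.comp measurable_prodMk_left).aemeasurable
    (.of_forall fun _ => hfin _)

end Window

theorem stmt12_general (w f g : ℝ → ℝ) (K : ℝ)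
    (hw : IsWindow w) (hCw : Integrable (fun x => |x| * w x))
    (hfp : IsProfile f) (hgp : IsProfile g)
    (hfm : Monotone f) (hgm : Monotone g)
    (hfrc : ∀ x, ContinuousWithinAt f (Ici x) x)
    (hgrc : ∀ x, ContinuousWithinAt g (Ici x) x)
    (hgs : Saturated g K) :
    ∫ x : ℝ, (1 - convw f w x) * g x =
      ∫ x : ℝ, (∫ y : ℝ, Vker w (x - y)
          ∂((⟨g, hgm, hgrc⟩ : StieltjesFunction ℝ).measure))
        ∂((⟨f, hfm, hfrc⟩ : StieltjesFunction ℝ).measure) := by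
  set F : StieltjesFunction ℝ := ⟨f, hfm, hfrc⟩
  set G : StieltjesFunction ℝ := ⟨g, hgm, hgrc⟩
  have := G.isProbabilityMeasure hgp.2.1 hgp.2.2
  have hsupp : ∀ᵐ y ∂G.measure, -K - 1 < y := G.ae_lt_of_eq_zero hgp.2.1 (hgs.1 _ (by linarith))
  calc ∫ x, (1 - convw f w x) * g x
      = (∫⁻ x, (∫⁻ x', iicLIntegral (fun z => ENNReal.ofReal (w z)) (x' - x) ∂F.measure) *
          G.measure (Iic x)).toReal :=
        hw.integral_one_sub_convw_mul F G hfp.2.1 hfp.2.2 (fun x => (hfp.1 x).1) hgp.2.1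
          fun x => (hgp.1 x).1
    _ = (∫⁻ x, ∫⁻ y, iicLIntegral (iicLIntegral fun z => ENNReal.ofReal (w z)) (x - y)
          ∂G.measure ∂F.measure).toReal := by
        rw [lintegral_lintegral_comp_sub_mul_measure_Iic _ _ (measurable_iicLIntegral _)]
    _ = _ := (hw.integral_integral_Vker_comp_sub hCw _ _ hsupp).symm

/-- Assume `C_w < ∞`. For nondecreasing right-continuous interpolating
profiles `f, g`, each saturated off some finite interval,
`∫ (1 - f^w) g = ∬ V(x-y) df(x) dg(y)` with the Lebesgue–Stieltjes measures of `f, g`. -/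
theorem stmt12 (w f g : ℝ → ℝ) (K : ℝ)
    (hw : IsWindow w) (hCw : Integrable (fun x => |x| * w x))
    (hfp : IsProfile f) (hgp : IsProfile g)
    (hfm : Monotone f) (hgm : Monotone g)
    (hfrc : ∀ x, ContinuousWithinAt f (Ici x) x)
    (hgrc : ∀ x, ContinuousWithinAt g (Ici x) x)
    (hfs : Saturated f K) (hgs : Saturated g K) :
    ∫ x : ℝ, (1 - convw f w x) * g x =
      ∫ x : ℝ, (∫ y : ℝ, Vker w (x - y)
          ∂((⟨g, hgm, hgrc⟩ : StieltjesFunction ℝ).measure))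
        ∂((⟨f, hfm, hfrc⟩ : StieltjesFunction ℝ).measure) :=
  stmt12_general w f g K hw hCw hfp hgp hfm hgm hfrc hgrc hgs

end
end

section
/- Assume C_w < ∞. For any nondecreasing bounded function h : ℝ → ℝ with limits h(-∞) at -∞ and h(+∞) at +∞, one has ∫_ℝ |h^w(x) - h(x)| dx ≤ C_w · (h(+∞) - h(-∞)). -/
open MeasureTheory Filter Set
open scoped ENNReal

noncomputable section

/-! Since `∫ w = 1`, `h^w(x) - h(x) = ∫ (h(x - z) - h(x)) w(z) dz`; after exchanging the order of
integration it suffices that `∫ |h(x - z) - h(x)| dx ≤ |z| (b - a)` for every shift `z`. For monotone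
`h` and `t ≥ 0` the integral of `h(x) - h(x - t)` over `[u, v]` telescopes to
`∫_{v-t}^v h - ∫_{u-t}^u h ≤ t b - t a`, uniformly in the interval. -/

section MonotoneShift

variable {h : ℝ → ℝ} {a b t : ℝ}

theorem Monotone.intervalIntegral_sub_comp_sub_le (hm : Monotone h) (ha : ∀ x, a ≤ h x)
    (hb : ∀ x, h x ≤ b) (ht : 0 ≤ t) (u v : ℝ) :
    ∫ x in u..v, (h x - h (x - t)) ≤ t * (b - a) := by
  have hi : ∀ c d : ℝ, IntervalIntegrable h volume c d := fun _ _ =>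
    (hm.monotoneOn _).intervalIntegrable
  have hi' : ∀ c d : ℝ, IntervalIntegrable (fun x => h (x - t)) volume c d := fun _ _ =>
    ((hm.comp fun _ _ hxy => sub_le_sub_right hxy t).monotoneOn _).intervalIntegrable
  have hupper : ∫ x in (v - t)..v, h x ≤ t * b := by
    simpa using intervalIntegral.integral_mono_on (a := v - t) (b := v) (by linarith) (hi _ _)
      intervalIntegrable_const fun x _ => hb x
  have hlower : t * a ≤ ∫ x in (u - t)..u, h x := by
    simpa using intervalIntegral.integral_mono_on (a := u - t) (b := u) (by linarith)
      intervalIntegrable_const (hi _ _) fun x _ => ha x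
  rw [intervalIntegral.integral_sub (hi _ _) (hi' _ _), intervalIntegral.integral_comp_sub_right,
    intervalIntegral.integral_interval_sub_interval_comm' (hi _ _) (hi _ _) (hi _ _)]
  linarith

theorem Monotone.lintegral_sub_comp_sub_le (hm : Monotone h) (ha : ∀ x, a ≤ h x)
    (hb : ∀ x, h x ≤ b) (ht : 0 ≤ t) :
    ∫⁻ x, ENNReal.ofReal (h x - h (x - t)) ≤ ENNReal.ofReal (t * (b - a)) := by
  have hmeas : Measurable fun x => h x - h (x - t) :=
    hm.measurable.sub (hm.measurable.comp (measurable_sub_const t))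
  have hcover := (aecover_Ioc (μ := volume) tendsto_neg_atTop_atBot tendsto_id)
    |>.lintegral_tendsto_of_countably_generated hmeas.ennreal_ofReal.aemeasurable
  refine _root_.le_of_tendsto hcover ((eventually_ge_atTop 0).mono fun n hn => ?_)
  have hint : IntervalIntegrable (fun x => h x - h (x - t)) volume (-n) n :=
    (hm.monotoneOn _).intervalIntegrable.sub
      ((hm.comp fun _ _ hxy => sub_le_sub_right hxy t).monotoneOn _).intervalIntegrable
  rw [id, ← ofReal_integral_eq_lintegral_ofReal hint.1
      (ae_of_all _ fun x => sub_nonneg.2 (hm (sub_le_self x ht))),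
    ← intervalIntegral.integral_of_le (by linarith)]
  exact ENNReal.ofReal_le_ofReal (hm.intervalIntegral_sub_comp_sub_le ha hb ht _ _)

theorem Monotone.lintegral_abs_comp_sub_sub_le (hm : Monotone h) (ha : ∀ x, a ≤ h x)
    (hb : ∀ x, h x ≤ b) (z : ℝ) :
    ∫⁻ x, ENNReal.ofReal |h (x - z) - h x| ≤ ENNReal.ofReal (|z| * (b - a)) := by
  rcases le_or_gt 0 z with hz | hz
  · have habs : ∀ x, |h (x - z) - h x| = h x - h (x - z) := fun x => by
      rw [abs_sub_comm, abs_of_nonneg (sub_nonneg.2 (hm (sub_le_self x hz)))]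
    simp_rw [habs, abs_of_nonneg hz]
    exact hm.lintegral_sub_comp_sub_le ha hb hz
  · -- translating by `z` turns the shift `z < 0` into the shift `-z > 0`
    have habs : ∀ x, |h (x - z) - h x| = h (x - z) - h (x - z - -z) := fun x => by
      rw [sub_neg_eq_add, sub_add_cancel, abs_of_nonneg (sub_nonneg.2 (hm (by linarith)))]
    simp_rw [habs, abs_of_neg hz]
    rw [lintegral_sub_right_eq_self (fun y => ENNReal.ofReal (h y - h (y - -z)))]
    exact hm.lintegral_sub_comp_sub_le ha hb (by linarith)

end MonotoneShift

section Convolution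

variable {w h : ℝ → ℝ} {M : ℝ}

theorem convw_sub_eq_integral (hwi : Integrable w) (hw1 : ∫ x, w x = 1) (hhm : Measurable h)
    (hM : ∀ y, |h y| ≤ M) (x : ℝ) :
    convw h w x - h x = ∫ z, (h (x - z) - h x) * w z := by
  have hconv : convw h w x = ∫ z, h (x - z) * w z := by
    rw [convw]
    simpa only [sub_sub_cancel] using
      (integral_sub_left_eq_self (fun y => h y * w (x - y)) volume x).symm
  have hint : Integrable fun z => h (x - z) * w z :=
    hwi.bdd_mul (hhm.comp (measurable_const_sub x)).aestronglyMeasurable (ae_of_all _ fun z => hM _)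
  simp_rw [sub_mul]
  rw [integral_sub hint (hwi.const_mul _), integral_const_mul, hw1, mul_one, hconv]

theorem ofReal_abs_convw_sub_le (hw0 : ∀ x, 0 ≤ w x) (hwi : Integrable w) (hw1 : ∫ x, w x = 1)
    (hhm : Measurable h) (hM : ∀ y, |h y| ≤ M) (x : ℝ) :
    ENNReal.ofReal |convw h w x - h x| ≤
      ∫⁻ z, ENNReal.ofReal |h (x - z) - h x| * ENNReal.ofReal (w z) := by
  simp_rw [convw_sub_eq_integral hwi hw1 hhm hM x, ← Real.enorm_eq_ofReal_abs,
    ← Real.enorm_of_nonneg (hw0 _), ← enorm_mul]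
  exact enorm_integral_le_lintegral_enorm _

end Convolution

/-- Assume `C_w < ∞`. For any nondecreasing bounded `h : ℝ → ℝ` with limits
`a` at `-∞` and `b` at `+∞`, one has `∫ |h^w(x) - h(x)| dx ≤ C_w (b - a)`
(the left-hand side valued in `[0,∞]`). -/
theorem stmt19 (w h : ℝ → ℝ) (a b : ℝ)
    (hw : IsWindow w) (hCw : Integrable (fun x => |x| * w x))
    (hm : Monotone h)
    (hbot : Tendsto h atBot (nhds a)) (htop : Tendsto h atTop (nhds b)) :
    (∫⁻ x : ℝ, ENNReal.ofReal |convw h w x - h x|) ≤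
      ENNReal.ofReal ((∫ x : ℝ, |x| * w x) * (b - a)) := by
  have ha : ∀ x, a ≤ h x := hm.le_of_tendsto hbot
  have hb : ∀ x, h x ≤ b := hm.ge_of_tendsto htop
  have hab : 0 ≤ b - a := sub_nonneg.2 ((ha 0).trans (hb 0))
  have hshift : ∀ z, Measurable fun x => ENNReal.ofReal |h (x - z) - h x| := fun z =>
    ((hm.measurable.comp (measurable_sub_const z)).sub hm.measurable).abs.ennreal_ofReal
  have hprod : AEMeasurable (Function.uncurry fun x z =>
      ENNReal.ofReal |h (x - z) - h x| * ENNReal.ofReal (w z)) (volume.prod volume) :=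
    (((hm.measurable.comp (measurable_fst.sub measurable_snd)).sub
      (hm.measurable.comp measurable_fst)).abs.ennreal_ofReal.aemeasurable).mul
      hw.integrable.aemeasurable.ennreal_ofReal.comp_snd
  calc ∫⁻ x, ENNReal.ofReal |convw h w x - h x|
      ≤ ∫⁻ x, ∫⁻ z, ENNReal.ofReal |h (x - z) - h x| * ENNReal.ofReal (w z) :=
        lintegral_mono fun x => ofReal_abs_convw_sub_le hw.nonneg hw.integrable hw.normalized
          hm.measurable (fun y => abs_le_max_abs_abs (ha y) (hb y)) x
    _ = ∫⁻ z, (∫⁻ x, ENNReal.ofReal |h (x - z) - h x|) * ENNReal.ofReal (w z) := by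
        rw [lintegral_lintegral_swap hprod]
        exact lintegral_congr fun z => lintegral_mul_const _ (hshift z)
    _ ≤ ∫⁻ z, ENNReal.ofReal (|z| * w z * (b - a)) := by
        refine lintegral_mono fun z => ?_
        rw [mul_right_comm, ENNReal.ofReal_mul (mul_nonneg (abs_nonneg z) hab)]
        gcongr
        exact hm.lintegral_abs_comp_sub_sub_le ha hb z
    _ = ENNReal.ofReal ((∫ x, |x| * w x) * (b - a)) := by
        rw [← integral_mul_const, ofReal_integral_eq_lintegral_ofReal (hCw.mul_const _)
          (ae_of_all _ fun z => mul_nonneg (mul_nonneg (abs_nonneg z) (hw.nonneg z)) hab)]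

end
end
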